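/- arXiv:2011.05420 — 3 statements merged into one kernel-verified Lean document; each statement's English description precedes it below -/
import Mathlib

section
/- If f : ℝ → ℂ is integrable, vanishes a.e. on some left half-line (-∞, a), and its Laplace transform Lf is bounded on the right half-plane {Re z > 0}, then f vanishes a.e. on (-∞, 0). -/
/-!
Split `f = g + h` with `g = f · 𝟙_(-∞, 0)` and `h = f · 𝟙_[0, ∞)`. As `g` has compact support, `L g`
is entire. It is bounded by `‖g‖₁` on `Re z ≤ 0`, and by `M + ‖h‖₁` on `Re z > 0`, where
`L g = L f - L h`. By Liouville it is constant, and the constant is `0` because `L g x → 0` as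
`x → -∞`. On the imaginary axis `L g` is the Fourier transform of `g`, so `g = 0` a.e.
-/

open MeasureTheory Set

noncomputable def laplace (f : ℝ → ℂ) (z : ℂ) : ℂ :=
  ∫ t : ℝ, f t * Complex.exp (-z * t)

open Complex Filter Bornology
open scoped FourierTransform Real Topology

theorem ae_eq_zero_of_fourier_eq_zero {V E : Type*} [NormedAddCommGroup V] [InnerProductSpace ℝ V]
    [FiniteDimensional ℝ V] [MeasurableSpace V] [BorelSpace V]
    [NormedAddCommGroup E] [NormedSpace ℂ E] [CompleteSpace E]
    {g : V → E} (hg : Integrable g) (h : 𝓕 g = 0) : g =ᵐ[volume] 0 := by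
  refine ae_eq_zero_of_integral_contDiff_smul_eq_zero hg.locallyIntegrable fun u hu hu_supp => ?_
  -- Write the test function `u` as `𝓕 Φ` and move `𝓕` onto `g`.
  set Φ : SchwartzMap V ℂ := 𝓕⁻ ((hu_supp.comp_left Complex.ofReal_zero).toSchwartzMap
    (Complex.ofRealCLM.contDiff.comp hu))
  have hΦ : 𝓕 (Φ : V → ℂ) = fun x => (u x : ℂ) := by
    rw [← SchwartzMap.fourier_coe, FourierTransform.fourier_fourierInv_eq]; rfl
  have hflip : (innerₗ V).flip = innerₗ V := by
    ext x y; exact real_inner_comm x y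
  have := VectorFourier.integral_fourierIntegral_smul_eq_flip (L := innerₗ V) (μ := volume)
    (ν := volume) Real.continuous_fourierChar continuous_inner Φ.integrable hg
  rw [hflip] at this
  change ∫ ξ, 𝓕 (Φ : V → ℂ) ξ • g ξ = ∫ x, Φ x • 𝓕 g x at this
  simpa [hΦ, h] using this

lemma norm_cexp_neg_mul_ofReal (z : ℂ) (t : ℝ) : ‖cexp (-z * t)‖ = Real.exp (-z.re * t) := by
  simp [Complex.norm_exp]

section

variable {g : ℝ → ℂ}

lemma aestronglyMeasurable_laplace_integrand (hg : Integrable g) (z : ℂ) :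
    AEStronglyMeasurable (fun t : ℝ => g t * cexp (-z * t)) :=
  hg.aestronglyMeasurable.mul (by fun_prop)

lemma norm_laplace_integrand_le {z : ℂ} {C : ℝ}
    (hC : ∀ᵐ t : ℝ, g t ≠ 0 → Real.exp (-z.re * t) ≤ C) :
    ∀ᵐ t : ℝ, ‖g t * cexp (-z * t)‖ ≤ ‖g t‖ * C := by
  filter_upwards [hC] with t ht
  rw [norm_mul, norm_cexp_neg_mul_ofReal]
  by_cases h0 : g t = 0
  · simp [h0]
  · exact mul_le_mul_of_nonneg_left (ht h0) (norm_nonneg _)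

lemma integrable_laplace_integrand (hg : Integrable g) {z : ℂ} {C : ℝ}
    (hC : ∀ᵐ t : ℝ, g t ≠ 0 → Real.exp (-z.re * t) ≤ C) :
    Integrable (fun t : ℝ => g t * cexp (-z * t)) :=
  (hg.norm.mul_const C).mono' (aestronglyMeasurable_laplace_integrand hg z)
    (norm_laplace_integrand_le hC)

lemma norm_laplace_le_integral_norm (hg : Integrable g) {z : ℂ}
    (hz : ∀ᵐ t : ℝ, g t ≠ 0 → 0 ≤ z.re * t) : ‖laplace g z‖ ≤ ∫ t, ‖g t‖ := by
  have hC : ∀ᵐ t : ℝ, g t ≠ 0 → Real.exp (-z.re * t) ≤ 1 := by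
    filter_upwards [hz] with t ht h0
    simpa using ht h0
  simpa [laplace] using
    norm_integral_le_of_norm_le (hg.norm.mul_const 1) (norm_laplace_integrand_le hC)

lemma exp_neg_mul_le_of_abs_le {r t R S : ℝ} (hr : |r| ≤ R) (ht : |t| ≤ S) :
    Real.exp (-r * t) ≤ Real.exp (R * S) := by
  rw [neg_mul]
  refine Real.exp_le_exp.2 ((neg_le_abs _).trans ?_)
  rw [abs_mul]
  exact mul_le_mul hr ht (abs_nonneg _) ((abs_nonneg _).trans hr)

lemma differentiable_laplace (hg : Integrable g) {R : ℝ} (hR : ∀ᵐ t : ℝ, g t ≠ 0 → |t| ≤ R) :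
    Differentiable ℂ (laplace g) := by
  intro z₀
  have hderiv := hasDerivAt_integral_of_dominated_loc_of_deriv_le (𝕜 := ℂ) (μ := volume)
    (F := fun z t => g t * cexp (-z * t)) (F' := fun z t => g t * (cexp (-z * t) * (-1 * t)))
    (x₀ := z₀) (Metric.ball_mem_nhds z₀ one_pos)
    (.of_forall fun z => aestronglyMeasurable_laplace_integrand hg z)
    (integrable_laplace_integrand hg (C := Real.exp (|z₀.re| * R))
      (by filter_upwards [hR] with t ht h0 using exp_neg_mul_le_of_abs_le le_rfl (ht h0)))
    (hg.aestronglyMeasurable.mul (by fun_prop))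
    (bound := fun t => ‖g t‖ * (R * Real.exp ((‖z₀‖ + 1) * R))) ?_ (hg.norm.mul_const _)
    (.of_forall fun t z _ => ((((hasDerivAt_id z).neg).mul_const (t : ℂ)).cexp).const_mul (g t))
  · exact hderiv.2.differentiableAt
  filter_upwards [hR] with t ht z hz
  by_cases h0 : g t = 0
  · simp [h0]
  have hre : |z.re| ≤ ‖z₀‖ + 1 := by
    have := mem_ball_iff_norm.1 hz
    calc |z.re| ≤ ‖z‖ := abs_re_le_norm z
      _ ≤ ‖z₀‖ + ‖z - z₀‖ := by simpa using norm_add_le z₀ (z - z₀)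
      _ ≤ ‖z₀‖ + 1 := by linarith
  have htR := ht h0
  have hnorm : ‖(-1 * t : ℂ)‖ = |t| := by simp
  rw [norm_mul, norm_mul, norm_cexp_neg_mul_ofReal, hnorm, mul_comm (Real.exp _)]
  exact mul_le_mul_of_nonneg_left (mul_le_mul htR (exp_neg_mul_le_of_abs_le hre htR)
    (by positivity) ((abs_nonneg _).trans htR)) (norm_nonneg _)

lemma tendsto_laplace_atBot (hg : Integrable g) (hneg : ∀ᵐ t : ℝ, g t ≠ 0 → t < 0) :
    Tendsto (fun x : ℝ => laplace g x) atBot (𝓝 0) := by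
  have hlim := tendsto_integral_filter_of_dominated_convergence (l := atBot) (μ := volume)
    (F := fun (x : ℝ) t => g t * cexp (-(x : ℂ) * t)) (f := fun _ => 0) (fun t => ‖g t‖)
    (.of_forall fun x => aestronglyMeasurable_laplace_integrand hg x) ?_ hg.norm ?_
  · simpa [laplace] using hlim
  · filter_upwards [eventually_le_atBot 0] with x hx
    refine (norm_laplace_integrand_le (C := 1) ?_).mono fun t ht => by simpa using ht
    filter_upwards [hneg] with t ht h0
    simpa using mul_nonneg_of_nonpos_of_nonpos hx (ht h0).le
  · filter_upwards [hneg] with t ht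
    by_cases h0 : g t = 0
    · simp [h0]
    rw [tendsto_zero_iff_norm_tendsto_zero]
    simp only [norm_mul, norm_cexp_neg_mul_ofReal, ofReal_re]
    have hexp : Tendsto (fun x : ℝ => Real.exp (-x * t)) atBot (𝓝 0) := by
      refine Real.tendsto_exp_atBot.comp ?_
      simpa [mul_comm] using tendsto_id.atBot_mul_const (neg_pos.2 (ht h0))
    simpa using hexp.const_mul ‖g t‖

lemma isBounded_range_laplace {h : ℝ → ℂ} {R M : ℝ} (hg : Integrable g)
    (hg_nonpos : ∀ᵐ t : ℝ, g t ≠ 0 → t ≤ 0) (hR : ∀ᵐ t : ℝ, g t ≠ 0 → |t| ≤ R)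
    (hh : Integrable h) (hh_nonneg : ∀ᵐ t : ℝ, h t ≠ 0 → 0 ≤ t)
    (hM : ∀ z : ℂ, 0 < z.re → ‖laplace (g + h) z‖ ≤ M) :
    IsBounded (range (laplace g)) := by
  refine isBounded_iff_forall_norm_le.2 ⟨max (∫ t, ‖g t‖) (M + ∫ t, ‖h t‖), ?_⟩
  rintro _ ⟨z, rfl⟩
  rcases le_or_gt z.re 0 with hz | hz
  · refine le_max_of_le_left (norm_laplace_le_integral_norm hg ?_)
    filter_upwards [hg_nonpos] with t ht h0 using mul_nonneg_of_nonpos_of_nonpos hz (ht h0)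
  · have hh_le : ‖laplace h z‖ ≤ ∫ t, ‖h t‖ := norm_laplace_le_integral_norm hh <| by
      filter_upwards [hh_nonneg] with t ht h0 using mul_nonneg hz.le (ht h0)
    have hg_int : Integrable (fun t : ℝ => g t * cexp (-z * t)) :=
      integrable_laplace_integrand hg (C := Real.exp (|z.re| * R)) <| by
        filter_upwards [hR] with t ht h0 using exp_neg_mul_le_of_abs_le le_rfl (ht h0)
    have hh_int : Integrable (fun t : ℝ => h t * cexp (-z * t)) :=
      integrable_laplace_integrand hh (C := 1) <| by
        filter_upwards [hh_nonneg] with t ht h0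
        simpa using mul_nonneg hz.le (ht h0)
    have hsplit : laplace g z = laplace (g + h) z - laplace h z := by
      simp only [laplace, Pi.add_apply, add_mul, integral_add hg_int hh_int, add_sub_cancel_right]
    refine le_max_of_le_right ?_
    calc ‖laplace g z‖ ≤ ‖laplace (g + h) z‖ + ‖laplace h z‖ := hsplit ▸ norm_sub_le _ _
      _ ≤ M + ∫ t, ‖h t‖ := add_le_add (hM z hz) hh_le

lemma laplace_eq_zero_of_isBounded_range (hg : Integrable g) (hneg : ∀ᵐ t : ℝ, g t ≠ 0 → t < 0)
    {R : ℝ} (hR : ∀ᵐ t : ℝ, g t ≠ 0 → |t| ≤ R) (hb : IsBounded (range (laplace g))) :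
    laplace g = 0 := by
  have hconst : ∀ z, laplace g z = laplace g 0 := fun z =>
    (differentiable_laplace hg hR).apply_eq_apply_of_bounded hb z 0
  have h0 : laplace g 0 = 0 :=
    tendsto_nhds_unique (by simp only [hconst, tendsto_const_nhds]) (tendsto_laplace_atBot hg hneg)
  exact funext fun z => (hconst z).trans h0

lemma fourier_eq_laplace (g : ℝ → ℂ) (ξ : ℝ) : 𝓕 g ξ = laplace g (2 * π * ξ * I) := by
  rw [Real.fourier_real_eq_integral_exp_smul, laplace]
  congr 1 with t
  rw [smul_eq_mul, mul_comm]
  push_cast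
  ring_nf

end

theorem laplace_bounded_implies_support_nonneg
    (f : ℝ → ℂ) (hf : Integrable f)
    (hsupp : ∃ a : ℝ, ∀ᵐ t : ℝ, t < a → f t = 0)
    (hbd : ∃ M : ℝ, ∀ z : ℂ, 0 < z.re → ‖laplace f z‖ ≤ M) :
    ∀ᵐ t : ℝ, t < 0 → f t = 0 := by
  obtain ⟨a, ha⟩ := hsupp
  obtain ⟨M, hM⟩ := hbd
  set g := (Iio (0 : ℝ)).indicator f
  set h := (Ici (0 : ℝ)).indicator f
  have hgh : g + h = f := by
    simpa only [compl_Ici] using indicator_compl_add_self (Ici (0 : ℝ)) f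
  have hg_neg : ∀ᵐ t : ℝ, g t ≠ 0 → t < 0 :=
    .of_forall fun t ht => (indicator_apply_ne_zero.1 ht).1
  have hg_bdd : ∀ᵐ t : ℝ, g t ≠ 0 → |t| ≤ |a| := by
    filter_upwards [ha] with t hta ht
    obtain ⟨htneg : t < 0, hft : f t ≠ 0⟩ := indicator_apply_ne_zero.1 ht
    have hat : a ≤ t := not_lt.1 (mt hta hft)
    rw [abs_of_neg htneg]
    exact (neg_le_neg hat).trans (neg_le_abs a)
  have hh_nonneg : ∀ᵐ t : ℝ, h t ≠ 0 → 0 ≤ t :=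
    .of_forall fun t ht => (indicator_apply_ne_zero.1 ht).1
  have hg : Integrable g := hf.indicator measurableSet_Iio
  have hL : laplace g = 0 := laplace_eq_zero_of_isBounded_range hg hg_neg hg_bdd <|
    isBounded_range_laplace hg (hg_neg.mono fun t ht h0 => (ht h0).le) hg_bdd
      (hf.indicator measurableSet_Ici) hh_nonneg (hgh ▸ hM)
  have hg0 : g =ᵐ[volume] 0 := ae_eq_zero_of_fourier_eq_zero hg <| funext fun ξ => by
    rw [fourier_eq_laplace, hL]; rfl
  filter_upwards [hg0] with t ht htneg
  simpa [g, htneg] using ht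
end

section
/- If f, g : ℝ → ℂ are integrable and each vanishes a.e. on some left half-line, then L(f*g)(z) = Lf(z) · Lg(z) for all z in the right half-plane {Re z > 0}. -/
open MeasureTheory Set
open scoped Convolution

noncomputable def conv (f g : ℝ → ℂ) (t : ℝ) : ℂ := ∫ s : ℝ, f (t - s) * g s

/-! The weight `t ↦ e^{-zt}` is a character of `(ℝ, +)`, so weighting by it commutes with
convolution; the Laplace transform is then the integral of the weighted function, and Fubini
(`integral_convolution`) turns the integral of a convolution into the product of the integrals.
Vanishing on a left half-line makes the weight bounded on the support when `Re z ≥ 0`. -/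

theorem conv_eq_convolution (f g : ℝ → ℂ) : conv f g = f ⋆[ContinuousLinearMap.mul ℂ ℂ] g := by
  rw [← convolution_flip]
  ext t
  simp [conv, convolution_def, mul_comm]

theorem integrable_mul_cexp_neg_mul {f : ℝ → ℂ} (hf : Integrable f) {a : ℝ}
    (hfa : ∀ᵐ t : ℝ, t < a → f t = 0) {z : ℂ} (hz : 0 ≤ z.re) :
    Integrable (fun t : ℝ => f t * Complex.exp (-z * t)) := by
  refine Integrable.mono' (hf.norm.mul_const (Real.exp (-z.re * a)))
    (hf.1.mul (by fun_prop : Continuous fun t : ℝ => Complex.exp (-z * t)).aestronglyMeasurable) ?_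
  filter_upwards [hfa] with t ht
  rcases lt_or_ge t a with hta | hat
  · simp [ht hta]
  · have hweight : ‖Complex.exp (-z * t)‖ ≤ Real.exp (-z.re * a) := by
      rw [Complex.norm_exp, Real.exp_le_exp]
      simp only [neg_mul, Complex.neg_re, Complex.mul_re, Complex.ofReal_re, Complex.ofReal_im,
        mul_zero, sub_zero, neg_le_neg_iff]
      exact mul_le_mul_of_nonneg_left hat hz
    rw [norm_mul]
    exact mul_le_mul_of_nonneg_left hweight (norm_nonneg _)

theorem mul_cexp_convolution (f g : ℝ → ℂ) (z : ℂ) (t : ℝ) :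
    ((fun s : ℝ => f s * Complex.exp (-z * s)) ⋆[ContinuousLinearMap.mul ℂ ℂ]
        (fun s : ℝ => g s * Complex.exp (-z * s))) t =
      (f ⋆[ContinuousLinearMap.mul ℂ ℂ] g) t * Complex.exp (-z * t) := by
  simp only [convolution_def, ContinuousLinearMap.mul_apply', ← integral_mul_const]
  congr 1 with s
  rw [mul_mul_mul_comm, ← Complex.exp_add]
  congr 2
  push_cast
  ring

theorem laplace_convolution
    (f g : ℝ → ℂ) (hf : Integrable f) (hg : Integrable g)
    (hfa : ∃ a : ℝ, ∀ᵐ t : ℝ, t < a → f t = 0)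
    (hgb : ∃ b : ℝ, ∀ᵐ t : ℝ, t < b → g t = 0) :
    ∀ z : ℂ, 0 < z.re → laplace (conv f g) z = laplace f z * laplace g z := by
  intro z hz
  obtain ⟨a, hfa⟩ := hfa
  obtain ⟨b, hgb⟩ := hgb
  have hF := integrable_mul_cexp_neg_mul hf hfa hz.le
  have hG := integrable_mul_cexp_neg_mul hg hgb hz.le
  calc laplace (conv f g) z
      = ∫ t, ((fun s : ℝ => f s * Complex.exp (-z * s)) ⋆[ContinuousLinearMap.mul ℂ ℂ]
          (fun s : ℝ => g s * Complex.exp (-z * s))) t := by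
        simp only [laplace, conv_eq_convolution, mul_cexp_convolution]
    _ = laplace f z * laplace g z := integral_convolution _ hF hG
end

section
/- Let F and G be holomorphic functions on the right half-plane ℍ = {Re z > 0} satisfying |F(z)| ≤ A e^{a Re z} and |G(z)| ≤ B e^{b Re z} for some positive constants A, a, B, b. If both F and G are unbounded on ℍ, then the product FG is also unbounded on ℍ. -/
/-!
Suppose `‖F * G‖ ≤ M` on the half-plane. By Phragmén–Lindelöf in vertical strips, an unbounded
function of exponential type is large somewhere on every vertical line `Re z = x` with `x` large,
so it suffices to bound `‖F z‖ * ‖G w‖` uniformly for `z`, `w` on a common line `Re = x ≥ 1`.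
Take `u = 1 + i (Im z + Im w) / 2`. Then `Φ ζ = F (ζ + u) * conj (G (conj ζ + u))` is holomorphic
(as `conj ∘ G ∘ conj` is), `‖Φ (z - u)‖ = ‖F z‖ * ‖G w‖`, `‖Φ t‖ = ‖(F * G) (t + u)‖ ≤ M` on the
positive real axis and `‖Φ‖ ≤ A * B * exp (a + b)` on the imaginary axis. Phragmén–Lindelöf in
the right half-plane, which needs only boundedness on the real axis, gives
`‖F z‖ * ‖G w‖ ≤ A * B * exp (a + b)`.
-/

open Complex Filter Asymptotics Bornology ComplexConjugate

section ExpType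

variable {H : ℂ → ℂ} {A a : ℝ}

theorem norm_le_mul_exp_of_re_le (hbd : ∀ z : ℂ, 0 < z.re → ‖H z‖ ≤ A * Real.exp (a * z.re))
    {z : ℂ} (hz : 0 < z.re) {x : ℝ} (hzx : z.re ≤ x) : ‖H z‖ ≤ A * Real.exp (|a| * x) := by
  have hA : 0 ≤ A := nonneg_of_mul_nonneg_left ((norm_nonneg _).trans (hbd z hz)) (Real.exp_pos _)
  refine (hbd z hz).trans (mul_le_mul_of_nonneg_left (Real.exp_le_exp.2 ?_) hA)
  calc a * z.re ≤ |a| * z.re := mul_le_mul_of_nonneg_right (le_abs_self a) hz.le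
    _ ≤ |a| * x := mul_le_mul_of_nonneg_left hzx (abs_nonneg a)

theorem norm_le_of_vertical_strip (hd : DifferentiableOn ℂ H {z : ℂ | 0 < z.re})
    (hbd : ∀ z : ℂ, 0 < z.re → ‖H z‖ ≤ A * Real.exp (a * z.re)) {x₁ x₂ C : ℝ} (hx₁ : 0 < x₁)
    (h₁ : ∀ z : ℂ, z.re = x₁ → ‖H z‖ ≤ C) (h₂ : ∀ z : ℂ, z.re = x₂ → ‖H z‖ ≤ C) {z : ℂ}
    (hz₁ : x₁ ≤ z.re) (hz₂ : z.re ≤ x₂) : ‖H z‖ ≤ C := by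
  have hcl : closure (re ⁻¹' Set.Ioo x₁ x₂) ⊆ {z : ℂ | 0 < z.re} :=
    (closure_minimal (fun y hy => hy.1.le) (isClosed_le continuous_const continuous_re)).trans
      fun y hy => hx₁.trans_le hy
  have hbdd : ∀ y ∈ re ⁻¹' Set.Ioo x₁ x₂, ‖H y‖ ≤ A * Real.exp (|a| * x₂) := fun y hy =>
    norm_le_mul_exp_of_re_le hbd (hx₁.trans hy.1) hy.2.le
  -- with `c = -1`, `B = 0` the comparison function is `1`: `H` is bounded on the strip
  refine PhragmenLindelof.vertical_strip (hd.mono hcl).diffContOnCl ⟨-1, ?_, 0, ?_⟩ h₁ h₂ hz₁ hz₂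
  · exact neg_one_lt_zero.trans_le (div_nonneg Real.pi_pos.le (sub_nonneg.2 (hz₁.trans hz₂)))
  · refine .of_bound (A * Real.exp (|a| * x₂)) ((eventually_principal.2 fun y hy => ?_).filter_mono
      inf_le_right)
    simpa using hbdd y hy

theorem eventually_exists_re_eq_lt_norm (hd : DifferentiableOn ℂ H {z : ℂ | 0 < z.re})
    (hbd : ∀ z : ℂ, 0 < z.re → ‖H z‖ ≤ A * Real.exp (a * z.re))
    (hub : ¬ ∃ M : ℝ, ∀ z : ℂ, 0 < z.re → ‖H z‖ ≤ M) (K : ℝ) :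
    ∀ᶠ x in atTop, ∃ z : ℂ, z.re = x ∧ K < ‖H z‖ := by
  by_contra hfreq
  simp only [not_eventually, not_exists, not_and, not_lt] at hfreq
  have hline₁ : ∀ z : ℂ, z.re = 1 → ‖H z‖ ≤ A * Real.exp |a| := fun z hz => by
    simpa using norm_le_mul_exp_of_re_le hbd (by rw [hz]; exact one_pos) hz.le
  refine hub ⟨max (A * Real.exp |a|) K, fun z hz => ?_⟩
  rcases le_or_gt z.re 1 with hz1 | hz1
  · exact le_max_of_le_left (by simpa using norm_le_mul_exp_of_re_le hbd hz hz1)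
  · obtain ⟨x, hlineₓ, hzx⟩ := (hfreq.and_eventually (eventually_ge_atTop z.re)).exists
    exact norm_le_of_vertical_strip hd hbd one_pos (fun w hw => le_max_of_le_left (hline₁ w hw))
      (fun w hw => le_max_of_le_right (hlineₓ w hw)) hz1.le hzx

end ExpType

noncomputable def reflProd (F G : ℂ → ℂ) (u ζ : ℂ) : ℂ :=
  F (ζ + u) * conj (G (conj ζ + u))

section ReflProd

variable {F G : ℂ → ℂ} {A a B b : ℝ} {u : ℂ}

theorem norm_reflProd (ζ : ℂ) : ‖reflProd F G u ζ‖ = ‖F (ζ + u)‖ * ‖G (conj ζ + u)‖ := by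
  simp [reflProd]

theorem norm_reflProd_ofReal (t : ℝ) : ‖reflProd F G u t‖ = ‖F (t + u) * G (t + u)‖ := by
  rw [norm_reflProd, conj_ofReal, norm_mul]

theorem differentiableAt_reflProd {ζ : ℂ} (hF : DifferentiableAt ℂ F (ζ + u))
    (hG : DifferentiableAt ℂ G (conj ζ + u)) : DifferentiableAt ℂ (reflProd F G u) ζ := by
  have hG' : DifferentiableAt ℂ (conj ∘ G ∘ conj) (ζ + conj u) :=
    differentiableAt_conj_conj_iff.2 (by simpa using hG)
  have hcomp : (conj ∘ G ∘ conj) ∘ (· + conj u) = fun ξ => conj (G (conj ξ + u)) := by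
    ext ξ; simp
  exact (hF.comp ζ (differentiableAt_id.add_const u)).mul
    (hcomp ▸ hG'.comp ζ (differentiableAt_id.add_const _))

theorem diffContOnCl_reflProd (hF : DifferentiableOn ℂ F {z : ℂ | 0 < z.re})
    (hG : DifferentiableOn ℂ G {z : ℂ | 0 < z.re}) (hu : 0 < u.re) :
    DiffContOnCl ℂ (reflProd F G u) {ζ : ℂ | 0 < ζ.re} := by
  have hopen : IsOpen {z : ℂ | 0 < z.re} := isOpen_lt continuous_const continuous_re
  refine DifferentiableOn.diffContOnCl fun ζ hζ => ?_
  replace hζ : 0 ≤ ζ.re := by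
    simpa [show {ζ : ℂ | 0 < ζ.re} = re ⁻¹' Set.Ioi 0 from rfl, closure_preimage_re] using hζ
  refine (differentiableAt_reflProd (hF.differentiableAt (hopen.mem_nhds ?_))
    (hG.differentiableAt (hopen.mem_nhds ?_))).differentiableWithinAt <;>
  · simp only [Set.mem_ofPred_eq, add_re, conj_re]; linarith

theorem reflProd_isBigO (hFbd : ∀ z : ℂ, 0 < z.re → ‖F z‖ ≤ A * Real.exp (a * z.re))
    (hGbd : ∀ z : ℂ, 0 < z.re → ‖G z‖ ≤ B * Real.exp (b * z.re)) (hu : 0 < u.re) :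
    reflProd F G u =O[cobounded ℂ ⊓ Filter.principal {ζ : ℂ | 0 < ζ.re}]
      fun ζ => Real.exp ((|a| + |b|) * ‖ζ‖) := by
  refine .of_bound (A * B * Real.exp ((|a| + |b|) * ‖u‖))
    ((eventually_principal.2 fun (ζ : ℂ) (hζ : 0 < ζ.re) => ?_).filter_mono inf_le_right)
  have hF := norm_le_mul_exp_of_re_le hFbd (z := ζ + u) (by simp; linarith)
    ((re_le_norm _).trans (norm_add_le _ _))
  have hG := norm_le_mul_exp_of_re_le hGbd (z := conj ζ + u) (by simp; linarith)
    ((re_le_norm _).trans ((norm_add_le _ _).trans_eq (by rw [norm_conj])))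
  rw [norm_reflProd, Real.norm_of_nonneg (Real.exp_pos _).le]
  calc ‖F (ζ + u)‖ * ‖G (conj ζ + u)‖
      ≤ A * Real.exp (|a| * (‖ζ‖ + ‖u‖)) * (B * Real.exp (|b| * (‖ζ‖ + ‖u‖))) :=
        mul_le_mul hF hG (norm_nonneg _) ((norm_nonneg _).trans hF)
    _ = A * B * Real.exp ((|a| + |b|) * ‖u‖) * Real.exp ((|a| + |b|) * ‖ζ‖) := by
        rw [mul_mul_mul_comm, ← Real.exp_add, mul_assoc (A * B), ← Real.exp_add]
        ring_nf

end ReflProd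

theorem norm_mul_norm_le_of_re_eq {F G : ℂ → ℂ} {A a B b M : ℝ}
    (hF : DifferentiableOn ℂ F {z : ℂ | 0 < z.re}) (hG : DifferentiableOn ℂ G {z : ℂ | 0 < z.re})
    (hFbd : ∀ z : ℂ, 0 < z.re → ‖F z‖ ≤ A * Real.exp (a * z.re))
    (hGbd : ∀ z : ℂ, 0 < z.re → ‖G z‖ ≤ B * Real.exp (b * z.re))
    (hM : ∀ z : ℂ, 0 < z.re → ‖F z * G z‖ ≤ M) {z w : ℂ} (hz : 1 ≤ z.re) (hzw : z.re = w.re) :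
    ‖F z‖ * ‖G w‖ ≤ A * B * Real.exp (a + b) := by
  set u : ℂ := ⟨1, (z.im + w.im) / 2⟩
  have hre : IsBoundedUnder (· ≤ ·) atTop fun t : ℝ => ‖reflProd F G u t‖ :=
    ⟨M, eventually_map.2 <| (eventually_ge_atTop 0).mono fun t ht => by
      rw [norm_reflProd_ofReal]; exact hM _ (by simp [u]; linarith)⟩
  have him (t : ℝ) : ‖reflProd F G u (t * I)‖ ≤ A * B * Real.exp (a + b) := by
    have hF := hFbd (t * I + u) (by simp [u])
    have hG := hGbd (conj (t * I) + u) (by simp [u])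
    simp only [add_re, mul_re, ofReal_re, ofReal_im, I_re, I_im, conj_re, u] at hF hG
    rw [norm_reflProd, Real.exp_add]
    calc _ ≤ A * Real.exp (a * 1) * (B * Real.exp (b * 1)) := by
          refine mul_le_mul (by simpa using hF) (by simpa using hG) (norm_nonneg _) ?_
          exact (norm_nonneg _).trans (by simpa using hF)
      _ = _ := by ring_nf
  have hζ₀ := PhragmenLindelof.right_half_plane_of_bounded_on_real
    (diffContOnCl_reflProd hF hG one_pos)
    ⟨1, one_lt_two, |a| + |b|, by simpa using reflProd_isBigO hFbd hGbd one_pos⟩ hre him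
    (z := ⟨z.re - 1, (z.im - w.im) / 2⟩) (by simpa using hz)
  rw [norm_reflProd] at hζ₀
  convert hζ₀ using 4 <;> apply Complex.ext <;> simp [u] <;> linarith

theorem product_unbounded_general
    (F G : ℂ → ℂ) (A a B b : ℝ)
    (hF : DifferentiableOn ℂ F {z : ℂ | 0 < z.re})
    (hG : DifferentiableOn ℂ G {z : ℂ | 0 < z.re})
    (hFbd : ∀ z : ℂ, 0 < z.re → ‖F z‖ ≤ A * Real.exp (a * z.re))
    (hGbd : ∀ z : ℂ, 0 < z.re → ‖G z‖ ≤ B * Real.exp (b * z.re))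
    (hFub : ¬ ∃ M : ℝ, ∀ z : ℂ, 0 < z.re → ‖F z‖ ≤ M)
    (hGub : ¬ ∃ M : ℝ, ∀ z : ℂ, 0 < z.re → ‖G z‖ ≤ M) :
    ¬ ∃ M : ℝ, ∀ z : ℂ, 0 < z.re → ‖F z * G z‖ ≤ M := by
  rintro ⟨M, hM⟩
  set C := A * B * Real.exp (a + b)
  set K := max C 1
  obtain ⟨x, ⟨z, rfl, hFz⟩, ⟨w, hw, hGw⟩, hx⟩ :=
    ((eventually_exists_re_eq_lt_norm hF hFbd hFub K).and
      ((eventually_exists_re_eq_lt_norm hG hGbd hGub K).and (eventually_ge_atTop 1))).exists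
  have hFG : ‖F z‖ * ‖G w‖ ≤ C := norm_mul_norm_le_of_re_eq hF hG hFbd hGbd hM hx hw.symm
  have hK : C ≤ K ∧ 1 ≤ K := ⟨le_max_left _ _, le_max_right _ _⟩
  nlinarith

theorem product_unbounded
    (F G : ℂ → ℂ) (A a B b : ℝ)
    (hA : 0 < A) (ha : 0 < a) (hB : 0 < B) (hb : 0 < b)
    (hF : DifferentiableOn ℂ F {z : ℂ | 0 < z.re})
    (hG : DifferentiableOn ℂ G {z : ℂ | 0 < z.re})
    (hFbd : ∀ z : ℂ, 0 < z.re → ‖F z‖ ≤ A * Real.exp (a * z.re))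
    (hGbd : ∀ z : ℂ, 0 < z.re → ‖G z‖ ≤ B * Real.exp (b * z.re))
    (hFub : ¬ ∃ M : ℝ, ∀ z : ℂ, 0 < z.re → ‖F z‖ ≤ M)
    (hGub : ¬ ∃ M : ℝ, ∀ z : ℂ, 0 < z.re → ‖G z‖ ≤ M) :
    ¬ ∃ M : ℝ, ∀ z : ℂ, 0 < z.re → ‖F z * G z‖ ≤ M :=
  product_unbounded_general F G A a B b hF hG hFbd hGbd hFub hGub
end
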